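/- Let $c, c'$ be $G$-invariant closure operators on the power set of a group $G$ with $c(A) \subseteq c'(A)$ for all $A$. Then the map $\varphi: S_c \to S_{c'}$, $(\Delta, g) \mapsto (c'(\Delta), g)$, is a monoid homomorphism that commutes with inversion. -/

import Mathlib

/-! Since `c ≤ c'`, the closure `c'` absorbs `c`: `c' (c A) = c' A`. Hence `φ` sends the product
`(c (Δ ∪ gΞ), gh)` to `(c' (Δ ∪ gΞ), gh)`, and `c' (Δ ∪ gΞ) = c' (c' Δ ∪ g c' Ξ)` by idempotence
and `G`-invariance of `c'`, which is the product of the images in `S_{c'}`. -/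

open scoped Pointwise

variable {G : Type*} [Group G]

/-- The set of pairs `(Δ, g)` with `Δ` a `c`-closed subset of `G` containing `1` and `g`. -/
def SC (c : ClosureOperator (Set G)) : Type _ :=
  {p : Set G × G // c p.1 = p.1 ∧ (1 : G) ∈ p.1 ∧ p.2 ∈ p.1}

/-- Multiplication `(Δ, g)(Ξ, h) = (c (Δ ∪ gΞ), gh)`. -/
def SCmul (c : ClosureOperator (Set G)) (s t : SC c) : SC c :=
  ⟨(c (s.1.1 ∪ s.1.2 • t.1.1), s.1.2 * t.1.2), by
    refine ⟨c.idempotent _, ?_, ?_⟩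
    · exact c.le_closure _ (Or.inl s.2.2.1)
    · exact c.le_closure _ (Or.inr (by
        simpa [smul_eq_mul] using Set.smul_mem_smul_set (a := s.1.2) t.2.2.2))⟩

/-- Inversion `(Δ, g)⁻¹ = (g⁻¹Δ, g⁻¹)` (needs `G`-invariance of `c`). -/
def SCinv (c : ClosureOperator (Set G))
    (hinv : ∀ (g : G) (A : Set G), c (g • A) = g • c A) (s : SC c) : SC c :=
  ⟨(s.1.2⁻¹ • s.1.1, s.1.2⁻¹), by
    refine ⟨by rw [hinv, s.2.1], ?_, ?_⟩
    · exact Set.mem_smul_set.mpr ⟨s.1.2, s.2.2.2, by simp⟩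
    · exact Set.mem_smul_set.mpr ⟨1, s.2.2.1, by simp⟩⟩

/-- The identity element `(c {1}, 1)`. -/
def SCone (c : ClosureOperator (Set G)) : SC c :=
  ⟨(c {1}, 1), c.idempotent _, c.le_closure _ rfl, c.le_closure _ rfl⟩

/-- The candidate maximum `(c {1, g}, g)` of the `σ`-class of `(Δ, g)`. -/
def SCm (c : ClosureOperator (Set G)) (s : SC c) : SC c :=
  ⟨(c {1, s.1.2}, s.1.2), c.idempotent _, c.le_closure _ (Or.inl rfl),
    c.le_closure _ (Or.inr rfl)⟩

/-- The map `(Δ, g) ↦ (c' Δ, g)` from `S_c` to `S_{c'}`, for `c ≤ c'` pointwise. -/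
def SCmap {c c' : ClosureOperator (Set G)} (hle : ∀ A : Set G, c A ≤ c' A) (s : SC c) :
    SC c' :=
  ⟨(c' s.1.1, s.1.2), c'.idempotent _, c'.le_closure _ s.2.2.1, c'.le_closure _ s.2.2.2⟩

theorem ClosureOperator.closure_closure_of_le {α : Type*} [PartialOrder α]
    {c c' : ClosureOperator α} (hle : ∀ x, c x ≤ c' x) (x : α) : c' (c x) = c' x :=
  le_antisymm (c'.le_closure_iff.1 (hle x)) (c'.monotone (c.le_closure x))

theorem SC.ext {c : ClosureOperator (Set G)} {s t : SC c} (hset : s.1.1 = t.1.1)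
    (helt : s.1.2 = t.1.2) : s = t :=
  Subtype.ext (Prod.ext hset helt)

section SCmap

variable {c c' : ClosureOperator (Set G)} (hle : ∀ A : Set G, c A ≤ c' A)

theorem SCmap_mul (hinv' : ∀ (g : G) (A : Set G), c' (g • A) = g • c' A) (s t : SC c) :
    SCmap hle (SCmul c s t) = SCmul c' (SCmap hle s) (SCmap hle t) := by
  refine SC.ext ?_ rfl
  change c' (c (s.1.1 ∪ s.1.2 • t.1.1)) = c' (c' s.1.1 ∪ s.1.2 • c' t.1.1)
  rw [ClosureOperator.closure_closure_of_le hle, ← hinv']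
  exact (c'.closure_sup_closure _ _).symm

theorem SCmap_one : SCmap hle (SCone c) = SCone c' :=
  SC.ext (ClosureOperator.closure_closure_of_le hle {1}) rfl

theorem SCmap_inv (hinv : ∀ (g : G) (A : Set G), c (g • A) = g • c A)
    (hinv' : ∀ (g : G) (A : Set G), c' (g • A) = g • c' A) (s : SC c) :
    SCmap hle (SCinv c hinv s) = SCinv c' hinv' (SCmap hle s) :=
  SC.ext (hinv' _ _) rfl

end SCmap

/-- If `c ≤ c'` pointwise are `G`-invariant closure operators on subsets of `G`, then
`(Δ, g) ↦ (c' Δ, g)` is a monoid homomorphism `S_c → S_{c'}` commuting with inversion. -/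
theorem stmt13 (c c' : ClosureOperator (Set G))
    (hinv : ∀ (g : G) (A : Set G), c (g • A) = g • c A)
    (hinv' : ∀ (g : G) (A : Set G), c' (g • A) = g • c' A)
    (hle : ∀ A : Set G, c A ≤ c' A) :
    (∀ s t : SC c, SCmap hle (SCmul c s t) = SCmul c' (SCmap hle s) (SCmap hle t)) ∧
    (SCmap hle (SCone c) = SCone c') ∧
    (∀ s : SC c, SCmap hle (SCinv c hinv s) = SCinv c' hinv' (SCmap hle s)) :=
  ⟨SCmap_mul hle hinv', SCmap_one hle, SCmap_inv hle hinv hinv'⟩
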